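/- Let (X_1, X_2) be a Latin hypercube sample of N = 2 points in [0,1)^2, and for ε ∈ (0, 1/2) set D(ε) = [0, 1/2 + ε)^2 \ [0, 1/2)^2. Then P(X_1 ∈ D(ε), X_2 ∈ D(ε)) = 2ε^2, P(X_i ∈ D(ε)) = ε(1 + ε) for i = 1, 2, and consequently lim_{ε → 0+} P(X_1 ∈ D(ε), X_2 ∈ D(ε)) / (P(X_1 ∈ D(ε)) P(X_2 ∈ D(ε))) = 2. -/

import Mathlib

open MeasureTheory ProbabilityTheory Filter
open scoped ENNReal Classical

namespace LHSPaper

/-- The anchored box `[0,a) = ∏_i [0, a_i)` in `[0,1)^d`. -/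
def anchoredBox {d : ℕ} (a : Fin d → ℝ) : Set (Fin d → ℝ) := {x | ∀ i, x i ∈ Set.Ico 0 (a i)}

/-- `C^d_0`, the collection of anchored boxes `[0,a)` with `a ∈ [0,1]^d`. -/
def anchoredBoxes (d : ℕ) : Set (Set (Fin d → ℝ)) :=
  {S | ∃ a : Fin d → ℝ, (∀ i, a i ∈ Set.Icc (0 : ℝ) 1) ∧ S = anchoredBox a}

/-- `D^d_0`, the collection of differences `B \ A` of anchored boxes. -/
def boxDiffs (d : ℕ) : Set (Set (Fin d → ℝ)) :=
  {S | ∃ A ∈ anchoredBoxes d, ∃ B ∈ anchoredBoxes d, S = B \ A}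

/-- The half-open unit cube `[0,1)^d`. -/
def unitCube (d : ℕ) : Set (Fin d → ℝ) := {x | ∀ i, x i ∈ Set.Ico (0 : ℝ) 1}

/-- `γ`-negative dependence of the indicators of the events `A 1, …, A N`. -/
def GammaNegDep {Ω : Type*} [MeasurableSpace Ω] (μ : Measure Ω) {N : ℕ}
    (γ : ℝ≥0∞) (A : Fin N → Set Ω) : Prop :=
  ∀ J : Finset (Fin N), J.Nonempty →
    μ (⋂ j ∈ J, A j) ≤ γ * ∏ j ∈ J, μ (A j) ∧
    μ (⋂ j ∈ J, (A j)ᶜ) ≤ γ * ∏ j ∈ J, μ (A j)ᶜ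

/-- The `𝒮`-correlation number of a random point tuple `X`. -/
noncomputable def corrNum {Ω : Type*} [MeasurableSpace Ω] (μ : Measure Ω) {N d : ℕ}
    (𝒮 : Set (Set (Fin d → ℝ))) (X : Fin N → Ω → Fin d → ℝ) : ℝ≥0∞ :=
  ⨆ (S : Set (Fin d → ℝ)) (_ : S ∈ 𝒮) (J : Finset (Fin N)) (_ : J.Nonempty),
    max (μ (⋂ j ∈ J, {ω | X j ω ∈ S}) / ∏ j ∈ J, μ {ω | X j ω ∈ S})
        (μ (⋂ j ∈ J, {ω | X j ω ∉ S}) / ∏ j ∈ J, μ {ω | X j ω ∉ S})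

instance (N : ℕ) : MeasurableSpace (Equiv.Perm (Fin N)) := ⊤

instance (N : ℕ) : Nonempty (Equiv.Perm (Fin N)) := ⟨Equiv.refl _⟩

/-- Value types of the sources of randomness of a Latin hypercube sample:
`d` random permutations and `N·d` random reals. -/
def lhsβ (d N : ℕ) : (Fin d ⊕ (Fin N × Fin d)) → Type :=
  fun i => Sum.elim (fun _ => Equiv.Perm (Fin N)) (fun _ => ℝ) i

noncomputable def lhsMS (d N : ℕ) : (i : Fin d ⊕ (Fin N × Fin d)) → MeasurableSpace (lhsβ d N i) :=
  fun i => match i with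
  | .inl _ => ⊤
  | .inr _ => inferInstanceAs (MeasurableSpace ℝ)

def lhsFun {Ω : Type*} {d N : ℕ} (π : Fin d → Ω → Equiv.Perm (Fin N))
    (U : Fin N → Ω → Fin d → ℝ) : (i : Fin d ⊕ (Fin N × Fin d)) → Ω → lhsβ d N i :=
  fun i => match i with
  | .inl j => π j
  | .inr p => fun ω => U p.1 ω p.2

/-- `X` is a Latin hypercube sample of `N` points in `[0,1)^d`, built from the
uniformly distributed random permutations `π_j` and the uniformly distributed
random variables `U_{n,j}`, all mutually independent. -/
def IsLHS {Ω : Type*} [MeasurableSpace Ω] (μ : Measure Ω) (d N : ℕ)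
    (X : Fin N → Ω → Fin d → ℝ)
    (π : Fin d → Ω → Equiv.Perm (Fin N)) (U : Fin N → Ω → Fin d → ℝ) : Prop :=
  (∀ j, Measure.map (π j) μ = (PMF.uniformOfFintype (Equiv.Perm (Fin N))).toMeasure) ∧
  (∀ n j, Measure.map (fun ω => U n ω j) μ = volume.restrict (Set.Ico (0 : ℝ) 1)) ∧
  iIndepFun (m := lhsMS d N) (lhsFun π U) μ ∧
  (∀ n j ω, X n ω j = (((π j ω) n : ℕ) + U n ω j) / N)

/-- An elementary interval in base `b` of order `k` in `[0,1)^d`. -/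
def IsElemInterval (b d k : ℕ) (E : Set (Fin d → ℝ)) : Prop :=
  ∃ ℓ : Fin d → ℕ, ∃ a : Fin d → ℕ, (∀ i, a i < b ^ ℓ i) ∧ (∑ i, ℓ i = k) ∧
    E = {x | ∀ i, x i ∈ Set.Ico ((a i : ℝ) / b ^ ℓ i) (((a i : ℝ) + 1) / b ^ ℓ i)}

/-- A `(t,m,d)`-net in base `b`: `b^m` points in `[0,1)^d` such that every elementary
interval of order `m - t` contains exactly `b^t` points (with multiplicity). -/
def IsNet (b d m t : ℕ) (P : Fin (b ^ m) → Fin d → ℝ) : Prop :=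
  (∀ n, P n ∈ unitCube d) ∧
  ∀ E : Set (Fin d → ℝ), IsElemInterval b d (m - t) E →
    (Finset.univ.filter fun n => P n ∈ E).card = b ^ t

/-- A `b`-ary scrambling of depth `ℓ`: a self-map of `[0,1)` mapping, for each
`k ∈ {1,…,ℓ}`, elementary intervals of order `k` into elementary intervals of order `k`,
distinct ones into distinct ones. -/
def IsScrambling (b ℓ : ℕ) (σ : ℝ → ℝ) : Prop :=
  (∀ x ∈ Set.Ico (0 : ℝ) 1, σ x ∈ Set.Ico (0 : ℝ) 1) ∧
  ∀ k, 1 ≤ k → k ≤ ℓ → ∃ f : ℕ → ℕ,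
    (∀ a < b ^ k, f a < b ^ k) ∧
    (∀ a < b ^ k, ∀ a' < b ^ k, a ≠ a' → f a ≠ f a') ∧
    (∀ a < b ^ k, ∀ x ∈ Set.Ico ((a : ℝ) / b ^ k) (((a : ℝ) + 1) / b ^ k),
      σ x ∈ Set.Ico ((f a : ℝ) / b ^ k) (((f a : ℝ) + 1) / b ^ k))

/-- A basic cube of an abstract scrambled `(t,m,d)`-net in base `b`. -/
def IsBasicCube (b d m t : ℕ) (C : Set (Fin d → ℝ)) : Prop :=
  ∃ k : Fin d → ℕ, (∀ j, k j < b ^ (m - t)) ∧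
    C = {x | ∀ j, x j ∈ Set.Ico ((k j : ℝ) / b ^ (m - t)) (((k j : ℝ) + 1) / b ^ (m - t))}

/-- An abstract scrambled `(t,m,d)`-net in base `b`. -/
def IsAbstractScrambledNet {Ω : Type*} [MeasurableSpace Ω] (μ : Measure Ω)
    (b d m t : ℕ) (Y : Fin (b ^ m) → Ω → (Fin d → ℝ)) : Prop :=
  (∀ᵐ ω ∂μ, IsNet b d m t fun n => Y n ω) ∧
  (∀ i C, IsBasicCube b d m t C → μ {ω | Y i ω ∈ C} = ((b : ℝ≥0∞) ^ (d * (m - t)))⁻¹) ∧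
  (∀ M : Set (Fin d → ℝ), MeasurableSet M →
    ∀ J : Finset (Fin (b ^ m)), J.Nonempty →
    ∀ C : Fin (b ^ m) → Set (Fin d → ℝ), (∀ j ∈ J, IsBasicCube b d m t (C j)) →
      μ (⋂ j ∈ J, {ω | Y j ω ∈ C j}) ≠ 0 →
      (μ[|⋂ j ∈ J, {ω | Y j ω ∈ C j}]) (⋂ j ∈ J, {ω | Y j ω ∈ M}) =
        ∏ j ∈ J, volume (M ∩ C j) / volume (C j))

/-! Given the permutations, `X_{n,j} = (π_j(n) + U_{n,j})/2` lies in `[0,c)` iff `U_{n,j}` lies in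
a fixed interval, and the `U_{n,j}` are independent of each other and of the permutations. Hence
the probability that the two points lie in anchored cubes `[0,c₀)²` and `[0,c₁)²` factorizes over
the coordinates into `(½ ∑_σ ∏_n |{u ∈ [0,1) : (σ(n) + u)/2 < c_n}|)²`. As `D(ε)` is the difference
of the cubes with sides `1/2 + ε` and `1/2`, inclusion–exclusion gives
`P(X₁, X₂ ∈ D(ε)) = 4ε² - ε² - ε² + 0` and `P(Xᵢ ∈ D(ε)) = (1/2 + ε)² - 1/4`. -/

open Set Topology

section FiniteMeasure

variable {α : Type*} [MeasurableSpace α] {μ : Measure α} [IsFiniteMeasure μ]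

theorem measureReal_sdiff_of_subset₀ {s s' : Set α} (hs : s' ⊆ s)
    (hs' : NullMeasurableSet s' μ) : μ.real (s \ s') = μ.real s - μ.real s' := by
  nth_rw 2 [← sdiff_union_of_subset hs]
  rw [measureReal_union₀ hs' disjoint_sdiff_left.aedisjoint]
  ring

theorem measureReal_sdiff_inter_sdiff {s s' t t' : Set α} (hs : s' ⊆ s) (ht : t' ⊆ t)
    (hsm : NullMeasurableSet s μ) (hsm' : NullMeasurableSet s' μ)
    (htm : NullMeasurableSet t μ) (htm' : NullMeasurableSet t' μ) :
    μ.real ((s \ s') ∩ (t \ t')) =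
      μ.real (s ∩ t) - μ.real (s' ∩ t) - μ.real (s ∩ t') + μ.real (s' ∩ t') := by
  have hsplit : (s \ s') ∩ (t \ t') = (s ∩ t) \ ((s' ∩ t) ∪ (s ∩ t')) := by
    ext; simp only [mem_inter_iff, Set.mem_sdiff, mem_union]; tauto
  have hcap : (s' ∩ t) ∩ (s ∩ t') = s' ∩ t' := by
    ext; simp only [mem_inter_iff]; constructor
    · rintro ⟨⟨h₁, -⟩, -, h₂⟩; exact ⟨h₁, h₂⟩
    · rintro ⟨h₁, h₂⟩; exact ⟨⟨h₁, ht h₂⟩, hs h₁, h₂⟩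
  have hunion := measureReal_union_add_inter₀ (μ := μ) (s := s' ∩ t) (hsm.inter htm')
  rw [hcap] at hunion
  rw [hsplit, measureReal_sdiff_of_subset₀
    (union_subset (inter_subset_inter_left _ hs) (inter_subset_inter_right _ ht))
    ((hsm'.inter htm).union (hsm.inter htm'))]
  linarith

end FiniteMeasure

theorem sum_perm_fin_two {M : Type*} [AddCommMonoid M] (f : Equiv.Perm (Fin 2) → M) :
    ∑ σ, f σ = f 1 + f (Equiv.swap 0 1) := by
  rw [show (Finset.univ : Finset (Equiv.Perm (Fin 2))) = {1, Equiv.swap 0 1} by decide,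
    Finset.sum_pair (by decide)]

/-- The values of `U_{n,j}` that put `X_{n,j}` into `S` when `π_j(n) = k`. -/
def jitterSet (N k : ℕ) (S : Set ℝ) : Set ℝ :=
  (fun u : ℝ => ((k : ℝ) + u) / N) ⁻¹' S ∩ Ico 0 1

theorem jitterSet_univ (N k : ℕ) : jitterSet N k univ = Ico 0 1 := by
  simp [jitterSet]

theorem volume_jitterSet_ne_top (N k : ℕ) (S : Set ℝ) : volume (jitterSet N k S) ≠ ⊤ :=
  ((measure_mono inter_subset_right).trans_lt measure_Ico_lt_top).ne

theorem measureReal_jitterSet_Ico_zero {N : ℕ} (hN : 0 < N) (k : ℕ) (c : ℝ) :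
    volume.real (jitterSet N k (Ico 0 c)) = max (min 1 (N * c - k)) 0 := by
  have hN' : (0 : ℝ) < N := Nat.cast_pos.mpr hN
  have hset : jitterSet N k (Ico 0 c) = Ico 0 (min 1 (N * c - k)) := by
    ext u
    simp only [jitterSet, mem_inter_iff, mem_preimage, mem_Ico, lt_min_iff,
      le_div_iff₀ hN', div_lt_iff₀ hN']
    constructor
    · rintro ⟨⟨-, h⟩, h₀, h₁⟩; exact ⟨h₀, h₁, by linarith⟩
    · rintro ⟨h₀, h₁, h⟩; exact ⟨⟨by rw [zero_mul]; positivity, by linarith⟩, h₀, h₁⟩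
  rw [hset, Real.volume_real_Ico, sub_zero]

theorem measureReal_jitterSet_two_zero {c : ℝ} (hc : 1 / 2 ≤ c) :
    volume.real (jitterSet 2 0 (Ico 0 c)) = 1 := by
  rw [measureReal_jitterSet_Ico_zero two_pos, min_eq_left (by push_cast; linarith)]
  norm_num

theorem measureReal_jitterSet_two_one {c : ℝ} (hc : 1 / 2 ≤ c) (hc' : c ≤ 1) :
    volume.real (jitterSet 2 1 (Ico 0 c)) = 2 * c - 1 := by
  rw [measureReal_jitterSet_Ico_zero two_pos, min_eq_right (by push_cast; linarith),
    max_eq_left (by push_cast; linarith)]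
  norm_num

namespace IsLHS

section General

variable {Ω : Type*} [MeasurableSpace Ω] {μ : Measure Ω} {d N : ℕ}
  {X : Fin N → Ω → Fin d → ℝ} {π : Fin d → Ω → Equiv.Perm (Fin N)}
  {U : Fin N → Ω → Fin d → ℝ}

theorem aemeasurable_perm (h : IsLHS μ d N X π U) (j : Fin d) : AEMeasurable (π j) μ :=
  AEMeasurable.of_map_ne_zero <| by rw [h.1 j]; exact NeZero.ne _

theorem aemeasurable_jitter (h : IsLHS μ d N X π U) (n : Fin N) (j : Fin d) :
    AEMeasurable (fun ω => U n ω j) μ :=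
  AEMeasurable.of_map_ne_zero <| by simp [h.2.1 n j, Real.volume_Ico]

theorem aemeasurable_coord (h : IsLHS μ d N X π U) (n : Fin N) (j : Fin d) :
    AEMeasurable (fun ω => X n ω j) μ := by
  simp only [h.2.2.2 n j]
  exact (AEMeasurable.add (f := fun ω => ((π j ω n : ℕ) : ℝ))
    ((measurable_from_top (f := fun σ : Equiv.Perm (Fin N) => ((σ n : ℕ) : ℝ))).comp_aemeasurable
      (h.aemeasurable_perm j))
    (h.aemeasurable_jitter n j)).div_const _

theorem measure_perm_eq (h : IsLHS μ d N X π U) (j : Fin d) (σ : Equiv.Perm (Fin N)) :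
    μ {ω | π j ω = σ} = (N.factorial : ℝ≥0∞)⁻¹ := by
  rw [show {ω | π j ω = σ} = π j ⁻¹' {σ} from rfl,
    ← Measure.map_apply_of_aemeasurable (h.aemeasurable_perm j) MeasurableSpace.measurableSet_top,
    h.1 j, PMF.toMeasure_apply_singleton _ _ MeasurableSpace.measurableSet_top,
    PMF.uniformOfFintype_apply, Fintype.card_perm, Fintype.card_fin]

theorem measure_jitter_mem (h : IsLHS μ d N X π U) (n : Fin N) (j : Fin d) {s : Set ℝ}
    (hs : MeasurableSet s) : μ {ω | U n ω j ∈ s} = volume (s ∩ Ico 0 1) := by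
  rw [show {ω | U n ω j ∈ s} = (fun ω => U n ω j) ⁻¹' s from rfl,
    ← Measure.map_apply_of_aemeasurable (h.aemeasurable_jitter n j) hs, h.2.1 n j,
    Measure.restrict_apply hs]

theorem nullMeasurableSet_perm_mem_jitter_mem (h : IsLHS μ d N X π U)
    (A : Fin d → Set (Equiv.Perm (Fin N))) (B : Fin N → Fin d → Set ℝ)
    (hB : ∀ n j, MeasurableSet (B n j)) :
    NullMeasurableSet {ω | (∀ j, π j ω ∈ A j) ∧ ∀ n j, U n ω j ∈ B n j} μ := by
  simp only [ofPred_and, ofPred_forall]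
  exact (NullMeasurableSet.iInter fun j =>
      (h.aemeasurable_perm j).nullMeasurableSet_preimage MeasurableSpace.measurableSet_top).inter
    (NullMeasurableSet.iInter fun n => NullMeasurableSet.iInter fun j =>
      (h.aemeasurable_jitter n j).nullMeasurableSet_preimage (hB n j))

theorem measure_perm_mem_jitter_mem (h : IsLHS μ d N X π U)
    (A : Fin d → Set (Equiv.Perm (Fin N))) (B : Fin N → Fin d → Set ℝ)
    (hB : ∀ n j, MeasurableSet (B n j)) :
    μ {ω | (∀ j, π j ω ∈ A j) ∧ ∀ n j, U n ω j ∈ B n j} =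
      (∏ j, μ {ω | π j ω ∈ A j}) * ∏ n, ∏ j, μ {ω | U n ω j ∈ B n j} := by
  have := h.2.2.1.measure_inter_preimage_eq_mul (S := Finset.univ)
    (sets := fun i => match i with
      | .inl j => A j
      | .inr p => B p.1 p.2)
    (by rintro (j | p) -; exacts [MeasurableSpace.measurableSet_top, hB p.1 p.2])
  convert this using 1
  · congr 1
    ext ω
    simp only [Finset.mem_univ, iInter_true, mem_iInter, mem_preimage, mem_ofPred_eq,
      Sum.forall, Prod.forall]
    rfl
  · rw [Fintype.prod_sum_type, Fintype.prod_prod_type]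
    rfl

theorem measure_forall_coord_mem (h : IsLHS μ d N X π U) (S : Fin N → Fin d → Set ℝ)
    (hS : ∀ n j, MeasurableSet (S n j)) :
    μ {ω | ∀ n j, X n ω j ∈ S n j} =
      ∏ j, ∑ σ : Equiv.Perm (Fin N),
        (N.factorial : ℝ≥0∞)⁻¹ * ∏ n, volume (jitterSet N (σ n) (S n j)) := by
  let jitterPre (k : ℕ) (n : Fin N) (j : Fin d) : Set ℝ :=
    (fun u : ℝ => ((k : ℝ) + u) / N) ⁻¹' S n j
  have hPre : ∀ k n j, MeasurableSet (jitterPre k n j) := fun k n j =>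
    (by fun_prop : Measurable fun u : ℝ => ((k : ℝ) + u) / N) (hS n j)
  let piece (p : Fin d → Equiv.Perm (Fin N)) : Set Ω :=
    {ω | (∀ j, π j ω ∈ ({p j} : Set _)) ∧ ∀ n j, U n ω j ∈ jitterPre (p j n) n j}
  have hunion : {ω | ∀ n j, X n ω j ∈ S n j} = ⋃ p, piece p := by
    ext ω
    simp only [piece, jitterPre, mem_iUnion, mem_ofPred_eq, mem_singleton_iff, mem_preimage,
      h.2.2.2]
    constructor
    · exact fun hω => ⟨fun j => π j ω, fun _ => rfl, hω⟩
    · rintro ⟨p, hp, hω⟩ n j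
      simpa only [hp] using hω n j
  have hdisj : Pairwise (Function.onFun Disjoint piece) := by
    refine fun p q hpq => disjoint_left.mpr fun ω hp hq => hpq (funext fun j => ?_)
    exact (mem_singleton_iff.mp (hp.1 j)).symm.trans (mem_singleton_iff.mp (hq.1 j))
  have hnull (p) : NullMeasurableSet (piece p) μ :=
    h.nullMeasurableSet_perm_mem_jitter_mem (fun j => {p j}) (fun n j => jitterPre (p j n) n j)
      fun n j => hPre _ n j
  rw [hunion, measure_iUnion₀ (hdisj.mono fun _ _ h => h.aedisjoint) hnull, tsum_fintype,
    Fintype.prod_sum]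
  refine Finset.sum_congr rfl fun p _ => ?_
  rw [h.measure_perm_mem_jitter_mem (fun j => {p j}) (fun n j => jitterPre (p j n) n j)
    fun n j => hPre _ n j]
  rw [Finset.prod_comm (s := Finset.univ) (t := Finset.univ), ← Finset.prod_mul_distrib]
  refine Finset.prod_congr rfl fun j _ => ?_
  simp only [mem_singleton_iff, h.measure_perm_eq, h.measure_jitter_mem _ _ (hPre _ _ _)]
  rfl

theorem measureReal_forall_coord_mem (h : IsLHS μ d N X π U) (S : Fin N → Fin d → Set ℝ)
    (hS : ∀ n j, MeasurableSet (S n j)) :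
    μ.real {ω | ∀ n j, X n ω j ∈ S n j} =
      ∏ j, ∑ σ : Equiv.Perm (Fin N),
        (N.factorial : ℝ)⁻¹ * ∏ n, volume.real (jitterSet N (σ n) (S n j)) := by
  rw [measureReal_def, h.measure_forall_coord_mem S hS, ENNReal.toReal_prod]
  refine Finset.prod_congr rfl fun j _ => ?_
  rw [ENNReal.toReal_sum fun σ _ => ENNReal.mul_ne_top (by simp [Nat.factorial_ne_zero])
    (ENNReal.prod_ne_top fun n _ => volume_jitterSet_ne_top _ _ _)]
  simp only [ENNReal.toReal_mul, ENNReal.toReal_prod, ENNReal.toReal_inv,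
    ENNReal.toReal_natCast, measureReal_def]

theorem nullMeasurableSet_forall_coord_mem (h : IsLHS μ d N X π U) (n : Fin N) {S : Set ℝ}
    (hS : MeasurableSet S) : NullMeasurableSet {ω | ∀ j, X n ω j ∈ S} μ := by
  rw [ofPred_forall]
  exact .iInter fun j => (h.aemeasurable_coord n j).nullMeasurableSet_preimage hS

end General

section TwoPoints

variable {Ω : Type*} [MeasurableSpace Ω] {μ : Measure Ω}
  {X : Fin 2 → Ω → Fin 2 → ℝ} {π : Fin 2 → Ω → Equiv.Perm (Fin 2)}
  {U : Fin 2 → Ω → Fin 2 → ℝ} {ε : ℝ}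

theorem measureReal_pair_coords_mem (h : IsLHS μ 2 2 X π U) {S T : Set ℝ} (hS : MeasurableSet S)
    (hT : MeasurableSet T) :
    μ.real ({ω | ∀ j, X 0 ω j ∈ S} ∩ {ω | ∀ j, X 1 ω j ∈ T}) =
      ((volume.real (jitterSet 2 0 S) * volume.real (jitterSet 2 1 T) +
        volume.real (jitterSet 2 1 S) * volume.real (jitterSet 2 0 T)) / 2) ^ 2 := by
  have hset : {ω | ∀ j, X 0 ω j ∈ S} ∩ {ω | ∀ j, X 1 ω j ∈ T} =
      {ω | ∀ n j, X n ω j ∈ ![S, T] n} := by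
    ext ω
    simp [Fin.forall_fin_two]
  rw [hset, h.measureReal_forall_coord_mem _ fun n _ => by fin_cases n <;> assumption]
  simp [Fin.prod_univ_two, sum_perm_fin_two]
  ring

theorem measureReal_point_coords_mem (h : IsLHS μ 2 2 X π U) (i : Fin 2) {S : Set ℝ}
    (hS : MeasurableSet S) :
    μ.real {ω | ∀ j, X i ω j ∈ S} =
      ((volume.real (jitterSet 2 0 S) + volume.real (jitterSet 2 1 S)) / 2) ^ 2 := by
  fin_cases i
  · simpa [jitterSet_univ] using h.measureReal_pair_coords_mem hS MeasurableSet.univ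
  · simpa [jitterSet_univ, add_comm] using h.measureReal_pair_coords_mem MeasurableSet.univ hS

theorem measureReal_mem_boxDiff [IsFiniteMeasure μ] (h : IsLHS μ 2 2 X π U)
    (hε : ε ∈ Ioo (0 : ℝ) (1 / 2)) (i : Fin 2) :
    μ.real {ω | X i ω ∈ anchoredBox (fun _ => 1 / 2 + ε) \ anchoredBox (fun _ => 1 / 2)} =
      ε * (1 + ε) := by
  obtain ⟨hε₀, hε₁⟩ := hε
  have hsub : {ω | ∀ j, X i ω j ∈ Ico 0 (1 / 2)} ⊆ {ω | ∀ j, X i ω j ∈ Ico 0 (1 / 2 + ε)} :=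
    fun ω hω j => Ico_subset_Ico_right (by linarith) (hω j)
  rw [show {ω | X i ω ∈ anchoredBox (fun _ => 1 / 2 + ε) \ anchoredBox (fun _ => 1 / 2)} =
      {ω | ∀ j, X i ω j ∈ Ico 0 (1 / 2 + ε)} \ {ω | ∀ j, X i ω j ∈ Ico 0 (1 / 2)} from rfl,
    measureReal_sdiff_of_subset₀ hsub (h.nullMeasurableSet_forall_coord_mem i measurableSet_Ico),
    h.measureReal_point_coords_mem i measurableSet_Ico, h.measureReal_point_coords_mem i measurableSet_Ico,
    measureReal_jitterSet_two_zero (by linarith), measureReal_jitterSet_two_zero le_rfl,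
    measureReal_jitterSet_two_one (by linarith) (by linarith),
    measureReal_jitterSet_two_one le_rfl (by norm_num)]
  ring

theorem measureReal_both_mem_boxDiff [IsFiniteMeasure μ] (h : IsLHS μ 2 2 X π U)
    (hε : ε ∈ Ioo (0 : ℝ) (1 / 2)) :
    μ.real {ω | X 0 ω ∈ anchoredBox (fun _ => 1 / 2 + ε) \ anchoredBox (fun _ => 1 / 2) ∧
      X 1 ω ∈ anchoredBox (fun _ => 1 / 2 + ε) \ anchoredBox (fun _ => 1 / 2)} = 2 * ε ^ 2 := by
  obtain ⟨hε₀, hε₁⟩ := hε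
  have hsub (i : Fin 2) :
      {ω | ∀ j, X i ω j ∈ Ico 0 (1 / 2)} ⊆ {ω | ∀ j, X i ω j ∈ Ico 0 (1 / 2 + ε)} :=
    fun ω hω j => Ico_subset_Ico_right (by linarith) (hω j)
  have hnull (i : Fin 2) (c : ℝ) :=
    h.nullMeasurableSet_forall_coord_mem i (measurableSet_Ico (a := 0) (b := c))
  rw [show {ω | X 0 ω ∈ anchoredBox (fun _ => 1 / 2 + ε) \ anchoredBox (fun _ => 1 / 2) ∧
      X 1 ω ∈ anchoredBox (fun _ => 1 / 2 + ε) \ anchoredBox (fun _ => 1 / 2)} =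
      ({ω | ∀ j, X 0 ω j ∈ Ico 0 (1 / 2 + ε)} \ {ω | ∀ j, X 0 ω j ∈ Ico 0 (1 / 2)}) ∩
      ({ω | ∀ j, X 1 ω j ∈ Ico 0 (1 / 2 + ε)} \ {ω | ∀ j, X 1 ω j ∈ Ico 0 (1 / 2)}) from rfl,
    measureReal_sdiff_inter_sdiff (hsub 0) (hsub 1) (hnull 0 _) (hnull 0 _) (hnull 1 _) (hnull 1 _)]
  simp only [h.measureReal_pair_coords_mem measurableSet_Ico measurableSet_Ico,
    measureReal_jitterSet_two_zero (le_rfl : (1 : ℝ) / 2 ≤ 1 / 2),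
    measureReal_jitterSet_two_zero (by linarith : (1 : ℝ) / 2 ≤ 1 / 2 + ε),
    measureReal_jitterSet_two_one (le_rfl : (1 : ℝ) / 2 ≤ 1 / 2) (by norm_num),
    measureReal_jitterSet_two_one (by linarith : (1 : ℝ) / 2 ≤ 1 / 2 + ε) (by linarith)]
  ring

end TwoPoints

end IsLHS

theorem tendsto_two_mul_sq_div_sq :
    Tendsto (fun ε : ℝ => 2 * ε ^ 2 / (ε * (1 + ε) * (ε * (1 + ε)))) (𝓝[>] 0) (𝓝 2) := by
  have hcont : Tendsto (fun ε : ℝ => 2 / (1 + ε) ^ 2) (𝓝[>] 0) (𝓝 2) := by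
    have : ContinuousAt (fun ε : ℝ => 2 / (1 + ε) ^ 2) 0 := by fun_prop (disch := norm_num)
    simpa using this.tendsto.mono_left nhdsWithin_le_nhds
  refine hcont.congr' (eventually_nhdsWithin_of_forall fun ε (hε : 0 < ε) => ?_)
  field_simp

/-- For a LHS of `2` points in `[0,1)^2` and
`D(ε) = [0,1/2+ε)^2 \ [0,1/2)^2` with `ε ∈ (0,1/2)`:
`P(X_1, X_2 ∈ D(ε)) = 2ε²`, `P(X_i ∈ D(ε)) = ε(1+ε)`, and the ratio tends to `2`. -/
theorem stmt8 {Ω : Type*} [MeasurableSpace Ω] (μ : Measure Ω) [IsProbabilityMeasure μ]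
    (X : Fin 2 → Ω → Fin 2 → ℝ) (π : Fin 2 → Ω → Equiv.Perm (Fin 2))
    (U : Fin 2 → Ω → Fin 2 → ℝ) (h : IsLHS μ 2 2 X π U)
    (D : ℝ → Set (Fin 2 → ℝ))
    (hD : ∀ ε : ℝ, D ε = anchoredBox (fun _ => 1 / 2 + ε) \ anchoredBox (fun _ => 1 / 2)) :
    (∀ ε ∈ Set.Ioo (0 : ℝ) (1 / 2),
      μ {ω | X 0 ω ∈ D ε ∧ X 1 ω ∈ D ε} = ENNReal.ofReal (2 * ε ^ 2) ∧
      ∀ i, μ {ω | X i ω ∈ D ε} = ENNReal.ofReal (ε * (1 + ε))) ∧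
    Filter.Tendsto
      (fun ε : ℝ => (μ {ω | X 0 ω ∈ D ε ∧ X 1 ω ∈ D ε}).toReal /
        ((μ {ω | X 0 ω ∈ D ε}).toReal * (μ {ω | X 1 ω ∈ D ε}).toReal))
      (nhdsWithin 0 (Set.Ioi 0)) (nhds 2) := by
  simp only [hD, ← measureReal_def]
  refine ⟨fun ε hε => ⟨?_, fun i => ?_⟩, tendsto_two_mul_sq_div_sq.congr' ?_⟩
  · rw [← h.measureReal_both_mem_boxDiff hε, ofReal_measureReal]
  · rw [← h.measureReal_mem_boxDiff hε i, ofReal_measureReal]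
  · filter_upwards [Ioo_mem_nhdsGT (by norm_num : (0 : ℝ) < 1 / 2)] with ε hε
    rw [h.measureReal_both_mem_boxDiff hε, h.measureReal_mem_boxDiff hε,
      h.measureReal_mem_boxDiff hε]

end LHSPaper
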